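/- arXiv:1603.01665 — 7 statements merged into one kernel-verified Lean document; each statement's English description precedes it below -/
import Mathlib

section
/- Let α be a nonzero irrational algebraic number over ℚ. The minimal polynomial of α over ℚ is reciprocal (i.e., its coefficient sequence is palindromic) if and only if ℚ(α) ≠ ℚ(α + α⁻¹). -/
open Polynomial IntermediateField

/-!
Put `p = minpoly ℚ α` and `β = α + α⁻¹`. If `p ∣ reverse p` then `reverse p = ±p`, and the
sign `-` would make `1` a root of the irreducible `p`; so `p` is reciprocal iff `p ∣ reverse p`,
i.e. iff `α⁻¹` is a conjugate of `α`. If it is, the embedding `ℚ⟮α⟯ → ℂ` sending `α ↦ α⁻¹`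
fixes `β` but not `α`, so `α ∉ ℚ⟮β⟯`. Conversely, if `α ∉ ℚ⟮β⟯` then
`X² - βX + 1 = (X - α)(X - α⁻¹)` is the minimal polynomial of `α` over `ℚ⟮β⟯`; it divides `p`,
so `p(α⁻¹) = 0`.
-/

/-- A polynomial `p` of degree `n` is reciprocal if its coefficient sequence is
palindromic: `c i = c (n - i)` for all `i ≤ n`. -/
def IsReciprocal {R : Type*} [Semiring R] (p : Polynomial R) : Prop :=
  ∀ i ≤ p.natDegree, p.coeff i = p.coeff (p.natDegree - i)

theorem isReciprocal_iff_reverse_eq {R : Type*} [Semiring R] (p : R[X]) :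
    IsReciprocal p ↔ p.reverse = p := by
  constructor
  · intro h
    ext i
    rw [coeff_reverse]
    rcases le_or_gt i p.natDegree with hi | hi
    · rw [revAt_le hi, h i hi]
    · rw [← revAtFun_eq, revAtFun, if_neg hi.not_ge]
  · intro h i hi
    rw [← revAt_le hi, ← coeff_reverse, h]

theorem eval_one_reverse {R : Type*} [CommSemiring R] (p : R[X]) :
    p.reverse.eval 1 = p.eval 1 := by
  let := invertibleOne (α := R)
  simpa using eval₂_reverse_mul_pow (RingHom.id R) 1 p

theorem reverse_eq_self_of_dvd_reverse {R : Type*} [CommRing R] [IsDomain R] {p : R[X]}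
    (hp : p.Monic) (h0 : p.coeff 0 ≠ 0) (h1 : ¬p.IsRoot 1) (hdvd : p ∣ p.reverse) :
    p.reverse = p := by
  have hrev : p.reverse = C (p.coeff 0) * p := by
    rw [← trailingCoeff_eq_coeff_zero h0, ← reverse_leadingCoeff]
    exact eq_leadingCoeff_mul_of_monic_of_dvd_of_natDegree_le hp hdvd (reverse_natDegree_le p)
  have hsq : p.coeff 0 * p.coeff 0 = 1 := by
    simpa [coeff_zero_reverse, hp.leadingCoeff] using (congr_arg (coeff · 0) hrev).symm
  -- `p.coeff 0 = -1` makes `p(1) = -p(1)`: impossible unless `2 = 0`, where `-1 = 1` anyway.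
  rcases mul_self_eq_one_iff.mp hsq with hc | hc
  · simpa [hc] using hrev
  · have h2 : (2 : R) * p.eval 1 = 0 := by
      have := congr_arg (eval 1) hrev
      rw [eval_one_reverse, hc, eval_mul, eval_C] at this
      linear_combination this
    rcases mul_eq_zero.mp h2 with hchar | hroot
    · rw [hrev, hc, show (-1 : R) = 1 by linear_combination -hchar, C_1, one_mul]
    · exact absurd hroot h1

variable {F E : Type*} [Field F] [Field E] [Algebra F E]

theorem isReciprocal_minpoly_iff {α : E} (hα : IsIntegral F α) (hα0 : α ≠ 0)
    (hdeg : 2 ≤ (minpoly F α).natDegree) :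
    IsReciprocal (minpoly F α) ↔ aeval α⁻¹ (minpoly F α) = 0 := by
  have hrev : aeval α (minpoly F α).reverse = 0 ↔ aeval α⁻¹ (minpoly F α) = 0 := by
    let := invertibleOfNonzero (inv_ne_zero hα0)
    simpa [aeval_def] using eval₂_reverse_eq_zero_iff (algebraMap F E) α⁻¹ (minpoly F α)
  rw [isReciprocal_iff_reverse_eq, ← hrev]
  refine ⟨fun h ↦ by rw [h]; exact minpoly.aeval F α, fun h ↦ ?_⟩
  refine reverse_eq_self_of_dvd_reverse (minpoly.monic hα) (minpoly.coeff_zero_ne_zero hα hα0)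
    (fun h1 ↦ ?_) (minpoly.dvd F α h)
  have := natDegree_eq_of_degree_eq_some
    (degree_eq_one_of_irreducible_of_root (minpoly.irreducible hα) h1)
  norm_num at this
  omega

theorem adjoin_ne_adjoin_add_inv_of_aeval_inv {α : E} (hα : IsIntegral F α)
    (hinv : aeval α⁻¹ (minpoly F α) = 0) (hne : α⁻¹ ≠ α) :
    F⟮α⟯ ≠ F⟮α + α⁻¹⟯ := by
  intro h
  set φ := (algHomAdjoinIntegralEquiv F (K := E) hα).symm
    ⟨α⁻¹, mem_aroots.mpr ⟨minpoly.ne_zero hα, hinv⟩⟩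
  have hφ : φ (AdjoinSimple.gen F α) = α⁻¹ := algHomAdjoinIntegralEquiv_symm_apply_gen F hα _
  -- `φ` fixes `α + α⁻¹`, which generates `F⟮α⟯`, so `φ` is the inclusion and `α⁻¹ = φ α = α`.
  have hφ_val : φ = F⟮α⟯.val := by
    refine algHom_ext_of_eq_adjoin F h ?_
    rintro x rfl
    have hgen : (⟨α + α⁻¹, _⟩ : F⟮α⟯) = AdjoinSimple.gen F α + (AdjoinSimple.gen F α)⁻¹ := rfl
    rw [hgen, map_add, map_inv₀, hφ]
    simp [add_comm]
  exact hne (hφ.symm.trans (by rw [hφ_val]; rfl))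

theorem minpoly_eq_of_natDegree_eq_two {K : Type*} [Field K] [Algebra K E] {α : E} {q : K[X]}
    (hq : q.Monic) (hdeg : q.natDegree = 2) (hroot : aeval α q = 0)
    (hα : α ∉ (algebraMap K E).range) :
    minpoly K α = q := by
  have hint : IsIntegral K α := ⟨q, hq, hroot⟩
  have h2 := (minpoly.two_le_natDegree_iff hint).mpr hα
  exact (eq_of_monic_of_dvd_of_natDegree_le (minpoly.monic hint) hq (minpoly.dvd K α hroot)
    (hdeg ▸ h2)).symm

theorem aeval_inv_of_adjoin_ne_adjoin_add_inv {α : E} (hα : IsIntegral F α)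
    (h : F⟮α⟯ ≠ F⟮α + α⁻¹⟯) :
    aeval α⁻¹ (minpoly F α) = 0 := by
  have hα0 : α ≠ 0 := by
    rintro rfl
    simp at h
  set K := F⟮α + α⁻¹⟯
  have hαK : α ∉ (algebraMap K E).range := by
    rintro ⟨y, hy⟩
    refine h (le_antisymm (adjoin_simple_le_iff.mpr (hy ▸ y.2)) (adjoin_simple_le_iff.mpr ?_))
    exact add_mem (mem_adjoin_simple_self F α) (inv_mem (mem_adjoin_simple_self F α))
  let q : K[X] := X ^ 2 - C (AdjoinSimple.gen F (α + α⁻¹)) * X + 1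
  have hq_aeval (x : E) : aeval x q = x ^ 2 - (α + α⁻¹) * x + 1 := by
    simp only [q, map_add, map_sub, map_mul, map_pow, map_one, aeval_X, aeval_C,
      IntermediateField.algebraMap_apply, AdjoinSimple.coe_gen]
  have hq : minpoly K α = q := by
    refine minpoly_eq_of_natDegree_eq_two (by dsimp only [q]; monicity!)
      (by dsimp only [q]; compute_degree!) ?_ hαK
    rw [hq_aeval]
    field_simp
    ring
  have hinvK : aeval α⁻¹ (minpoly K α) = 0 := by
    rw [hq, hq_aeval]
    field_simp
    ring
  obtain ⟨r, hr⟩ := minpoly.dvd_map_of_isScalarTower F K α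
  rw [← aeval_map_algebraMap K, hr, map_mul, hinvK, zero_mul]

theorem stmt0 (α : ℂ) (hα0 : α ≠ 0) (halg : IsAlgebraic ℚ α)
    (hirr : α ∉ Set.range ((↑) : ℚ → ℂ)) :
    IsReciprocal (minpoly ℚ α) ↔ ℚ⟮α⟯ ≠ ℚ⟮α + α⁻¹⟯ := by
  have hint : IsIntegral ℚ α := halg.isIntegral
  have hα : α ∉ (algebraMap ℚ ℂ).range := by
    rintro ⟨q, rfl⟩
    exact hirr ⟨q, (eq_ratCast _ q).symm⟩
  have hinv : α⁻¹ ≠ α := by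
    intro h
    have : α ^ 2 = 1 := by
      rw [← mul_inv_cancel₀ hα0, h, sq]
    rcases sq_eq_one_iff.mp this with rfl | rfl
    · exact hirr ⟨1, Rat.cast_one⟩
    · exact hirr ⟨-1, by push_cast; rfl⟩
  rw [isReciprocal_minpoly_iff hint hα0 ((minpoly.two_le_natDegree_iff hint).mpr hα)]
  exact ⟨fun h ↦ adjoin_ne_adjoin_add_inv_of_aeval_inv hint h hinv,
    aeval_inv_of_adjoin_ne_adjoin_add_inv hint⟩
end

section
/- If α is an algebraic number of norm 1 (the product of all conjugates of α over ℚ equals 1) such that ℚ(α + α⁻¹) has degree 2 over ℚ, then ℚ(α) ≠ ℚ(α + α⁻¹). -/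
/-!
If `ℚ(α) = ℚ(α + α⁻¹)` has degree 2, the minimal polynomial of `α` is a monic quadratic
`X² + bX + c`, and `c` is the norm of `α`, i.e. `c = 1`. Dividing `α² + bα + 1 = 0` by `α` gives
`α + α⁻¹ = -b ∈ ℚ`, so `ℚ(α + α⁻¹) = ℚ` has degree 1, not 2.
-/

open Polynomial IntermediateField

section

variable {K L : Type*} [Field K] [Field L] [Algebra K L]

theorem minpoly_coeff_zero_eq_one_of_roots_prod_eq_one [IsAlgClosed L] {α : L}
    (hα : IsIntegral K α) (heven : Even (minpoly K α).natDegree)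
    (hnorm : ((minpoly K α).map (algebraMap K L)).roots.prod = 1) :
    (minpoly K α).coeff 0 = 1 := by
  apply (algebraMap K L).injective
  rw [← coeff_map, (IsAlgClosed.splits _).coeff_zero_eq_prod_roots_of_monic
    ((minpoly.monic hα).map _), natDegree_map, hnorm, heven.neg_one_pow, mul_one, map_one]

theorem add_inv_eq_of_minpoly_natDegree_eq_two {α : L} (hα : IsIntegral K α)
    (hdeg : (minpoly K α).natDegree = 2) (hc : (minpoly K α).coeff 0 = 1) :
    α + α⁻¹ = algebraMap K L (-(minpoly K α).coeff 1) := by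
  have hlead : (minpoly K α).coeff 2 = 1 := hdeg ▸ (minpoly.monic hα).coeff_natDegree
  have hroot : α ^ 2 + algebraMap K L ((minpoly K α).coeff 1) * α + 1 = 0 := by
    have := minpoly.aeval K α
    rw [aeval_eq_sum_range, hdeg] at this
    simpa [Finset.sum_range_succ, hc, hlead, Algebra.smul_def, add_comm, add_left_comm,
      mul_comm] using this
  have hα0 : α ≠ 0 := by
    rintro rfl
    simp at hroot
  field_simp
  rw [map_neg]
  linear_combination hroot

end

theorem stmt2 (α : ℂ) (halg : IsAlgebraic ℚ α)
    (hnorm : (((minpoly ℚ α).map (algebraMap ℚ ℂ)).roots).prod = 1)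
    (hdeg : Module.finrank ℚ ℚ⟮α + α⁻¹⟯ = 2) :
    ℚ⟮α⟯ ≠ ℚ⟮α + α⁻¹⟯ := by
  intro h
  have hα := halg.isIntegral
  have hdegα : (minpoly ℚ α).natDegree = 2 := by rw [← adjoin.finrank hα, h, hdeg]
  have hc := minpoly_coeff_zero_eq_one_of_roots_prod_eq_one hα (hdegα ▸ even_two) hnorm
  have hrat : α + α⁻¹ ∈ (⊥ : IntermediateField ℚ ℂ) := by
    rw [add_inv_eq_of_minpoly_natDegree_eq_two hα hdegα hc]
    exact IntermediateField.algebraMap_mem _ _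
  rw [adjoin_simple_eq_bot_iff.mpr hrat, IntermediateField.finrank_bot] at hdeg
  exact absurd hdeg (by norm_num)
end

section
/- If α is a Pisot number of degree greater than 2 over ℚ, then ℚ(α) = ℚ(α + α⁻¹). -/
/-!
Put `z = α + α⁻¹`. Over `ℚ(z)` the number `α` is a root of `X² - zX + 1`, so if `α ∉ ℚ(z)` this
quadratic is its minimal polynomial over `ℚ(z)` and `α⁻¹` is a `ℚ`-conjugate of `α`. The minimal
polynomial of `α` over `ℚ` then divides its own reverse, so the conjugates of `α` are closed under
inversion. Since the degree exceeds 2 there is a conjugate `β ∉ {α, α⁻¹}`; both `β` and `β⁻¹` are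
conjugates other than `α`, and they cannot both lie in the open unit disc.
-/

open Polynomial IntermediateField

theorem Polynomial.aeval_inv_reverse_eq_zero_iff {R L : Type*} [CommSemiring R] [Field L]
    [Algebra R L] {x : L} (hx : x ≠ 0) (p : R[X]) :
    aeval x⁻¹ p.reverse = 0 ↔ aeval x p = 0 := by
  let := invertibleOfNonzero hx
  simpa only [aeval_def, invOf_eq_inv] using eval₂_reverse_eq_zero_iff (algebraMap R L) x p

section

variable {K L : Type*} [Field K] [Field L] [Algebra K L] {x y : L}

theorem IsConjRoot.inv (h : IsConjRoot K x y) (hx : IsIntegral K x)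
    (hinv : IsConjRoot K x x⁻¹) : IsConjRoot K x y⁻¹ := by
  rcases eq_or_ne x 0 with rfl | hx0
  · rw [isConjRoot_zero_iff_eq_zero.mp h, inv_zero]
  have hdvd : minpoly K x ∣ (minpoly K x).reverse := by
    rw [isConjRoot_def.mp hinv]
    refine minpoly.dvd K x⁻¹ ?_
    rw [← isConjRoot_def.mp hinv, aeval_inv_reverse_eq_zero_iff hx0]
    exact minpoly.aeval K x
  have hy0 : y ≠ 0 := h.ne_zero hx0
  refine isConjRoot_of_aeval_eq_zero hx ?_
  rw [← aeval_inv_reverse_eq_zero_iff (inv_ne_zero hy0), inv_inv]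
  exact aeval_eq_zero_of_dvd_aeval_eq_zero hdvd h.aeval_eq_zero

theorem minpoly.eq_of_natDegree_eq_two_of_notMem {q : K[X]} (hq : q.Monic)
    (hdeg : q.natDegree = 2) (hx : Polynomial.aeval x q = 0) (hxK : x ∉ (algebraMap K L).range) :
    minpoly K x = q := by
  have hint : IsIntegral K x := ⟨q, hq, hx⟩
  refine (eq_of_monic_of_dvd_of_natDegree_le (minpoly.monic hint) hq (minpoly.dvd K x hx) ?_).symm
  rw [hdeg]
  exact (minpoly.two_le_natDegree_iff hint).mpr hxK

theorem IntermediateField.mem_adjoin_simple_add_inv_or_isConjRoot_inv (hx : IsIntegral K x) :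
    x ∈ K⟮x + x⁻¹⟯ ∨ IsConjRoot K x x⁻¹ := by
  rcases eq_or_ne x 0 with rfl | hx0
  · exact Or.inl (zero_mem _)
  refine or_iff_not_imp_left.mpr fun hxE => ?_
  set E := K⟮x + x⁻¹⟯
  let q : E[X] := X ^ 2 - C ⟨x + x⁻¹, mem_adjoin_simple_self K _⟩ * X + 1
  have hq : q.Monic := by
    simp only [q]
    monicity!
  have hqdeg : q.natDegree = 2 := by
    simp only [q]
    compute_degree!
  have hqx : aeval x q = 0 := by
    simp only [map_add, aeval_sub, map_pow, aeval_X, map_mul, aeval_C, algebraMap_apply, map_one, q]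
    field_simp
    ring
  have hqxinv : aeval x⁻¹ q = 0 := by
    simp only [map_add, aeval_sub, map_pow, aeval_X, map_mul, aeval_C, algebraMap_apply, map_one, q]
    field_simp
    ring
  have hmin : minpoly E x = q := minpoly.eq_of_natDegree_eq_two_of_notMem hq hqdeg hqx <| by
    simpa only [RingHom.mem_range, algebraMap_apply, Subtype.exists, exists_prop, exists_eq_right]
      using hxE
  refine isConjRoot_of_aeval_eq_zero hx ?_
  rw [← aeval_map_algebraMap E]
  exact aeval_eq_zero_of_dvd_aeval_eq_zero (minpoly.dvd_map_of_isScalarTower K E x) (hmin ▸ hqxinv)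

theorem exists_isConjRoot_ne_ne [IsAlgClosed L] (hx : IsSeparable K x)
    (hdeg : 2 < (minpoly K x).natDegree) (a : L) :
    ∃ y, IsConjRoot K x y ∧ y ≠ x ∧ y ≠ a := by
  by_contra! h
  have hsub : (minpoly K x).rootSet L ⊆ {x, a} := fun y hy => by
    rw [← isConjRoot_iff_mem_minpoly_rootSet hx.isIntegral] at hy
    by_cases hyx : y = x
    · exact Or.inl hyx
    · exact Or.inr (h y hy hyx)
  have hcard := Set.ncard_le_ncard hsub
  rw [Set.ncard_eq_toFinset_card', Set.toFinset_card,
    card_rootSet_eq_natDegree hx (IsAlgClosed.splits _)] at hcard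
  have hpair := Set.ncard_insert_le x {a}
  rw [Set.ncard_singleton] at hpair
  omega

end

theorem stmt4_general (α : ℝ)
    (hconj : ∀ β : ℂ, (Polynomial.aeval β) (minpoly ℚ α) = 0 → β ≠ (α : ℂ) → ‖β‖ < 1)
    (hdeg : 2 < (minpoly ℚ α).natDegree) :
    ℚ⟮(α : ℂ)⟯ = ℚ⟮(α : ℂ) + (α : ℂ)⁻¹⟯ := by
  have hmin : minpoly ℚ (α : ℂ) = minpoly ℚ α := minpoly.algebraMap_eq Complex.ofReal_injective α
  rw [← hmin] at hconj hdeg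
  have hint : IsIntegral ℚ (α : ℂ) := minpoly.ne_zero_iff.mp (ne_zero_of_natDegree_gt hdeg)
  have hα0 : (α : ℂ) ≠ 0 := by
    rintro h
    rw [h, minpoly.zero, natDegree_X] at hdeg
    omega
  have hmem : (α : ℂ) ∈ ℚ⟮(α : ℂ) + (α : ℂ)⁻¹⟯ := by
    refine (mem_adjoin_simple_add_inv_or_isConjRoot_inv hint).resolve_right fun hinv => ?_
    obtain ⟨β, hβ, hβα, hβα'⟩ :=
      exists_isConjRoot_ne_ne (minpoly.irreducible hint).separable hdeg (α : ℂ)⁻¹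
    have hβ0 : β ≠ 0 := hβ.ne_zero hα0
    have hβ1 : ‖β‖ < 1 := hconj β hβ.aeval_eq_zero hβα
    have hβ1' : ‖β⁻¹‖ < 1 :=
      hconj β⁻¹ (hβ.inv hint hinv).aeval_eq_zero fun h => hβα' (inv_eq_iff_eq_inv.mp h)
    rw [norm_inv] at hβ1'
    exact ((one_lt_inv₀ (norm_pos_iff.mpr hβ0)).mpr hβ1).not_gt hβ1'
  refine le_antisymm (adjoin_simple_le_iff.mpr hmem) (adjoin_simple_le_iff.mpr ?_)
  exact add_mem (mem_adjoin_simple_self ℚ _) (inv_mem (mem_adjoin_simple_self ℚ _))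

theorem stmt4 (α : ℝ) (h1 : 1 < α) (hint : IsIntegral ℤ α)
    (hconj : ∀ β : ℂ, (Polynomial.aeval β) (minpoly ℚ α) = 0 → β ≠ (α : ℂ) → ‖β‖ < 1)
    (hdeg : 2 < (minpoly ℚ α).natDegree) :
    ℚ⟮(α : ℂ)⟯ = ℚ⟮(α : ℂ) + (α : ℂ)⁻¹⟯ :=
  stmt4_general α hconj hdeg
end

section
/- A real algebraic unit α > 1 of degree 3 over ℚ is bi-Perron if and only if it is a Pisot number. -/
/-!
The conjugates of a cubic unit `α > 1` are `α, β, γ` with `α ‖β‖ ‖γ‖ = 1`, the constant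
coefficient of the minimal polynomial being `±1`. If `‖β‖, ‖γ‖ < 1` this gives
`‖β‖ = 1 / (α ‖γ‖) > α⁻¹`. Conversely, if `‖γ‖ ≥ α⁻¹` and `‖β‖ ≥ 1`, the product forces `‖β‖ = 1`;
then `β` is not real (it would be the rational root `±1`), so `γ = conj β` also has norm `1`,
and `α = 1`.
-/

open Polynomial ComplexConjugate

theorem isUnit_coeff_zero_minpoly_inv {R K : Type*} [CommRing R] [IsDomain R]
    [IsIntegrallyClosed R] [Field K] [Algebra R K] [Module.IsTorsionFree R K] {x : K}
    (hx0 : x ≠ 0) (hx : IsIntegral R x) (hinv : IsIntegral R x⁻¹) :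
    IsUnit ((minpoly R x⁻¹).coeff 0) := by
  let : Invertible x := invertibleOfNonzero hx0
  have hroot : aeval x⁻¹ (minpoly R x).reverse = 0 := by
    rw [aeval_def, ← invOf_eq_inv, eval₂_reverse_eq_zero_iff, ← aeval_def, minpoly.aeval]
  -- the reversal of `minpoly R x` has constant coefficient `1` and is a multiple of `minpoly R x⁻¹`
  obtain ⟨q, hq⟩ := minpoly.isIntegrallyClosed_dvd hinv hroot
  have hcoeff := congrArg (coeff · 0) hq
  simp only [coeff_zero_reverse, (minpoly.monic hx).leadingCoeff, mul_coeff_zero] at hcoeff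
  exact .of_mul_eq_one _ hcoeff.symm

theorem isUnit_coeff_zero_minpoly {R K : Type*} [CommRing R] [IsDomain R]
    [IsIntegrallyClosed R] [Field K] [Algebra R K] [Module.IsTorsionFree R K] {x : K}
    (hx0 : x ≠ 0) (hx : IsIntegral R x) (hinv : IsIntegral R x⁻¹) :
    IsUnit ((minpoly R x).coeff 0) := by
  simpa using isUnit_coeff_zero_minpoly_inv (inv_ne_zero hx0) hinv (by rwa [inv_inv])

theorem abs_coeff_zero_minpoly_eq_one {K : Type*} [Field K] [CharZero K] {x : K} (hx0 : x ≠ 0)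
    (hx : IsIntegral ℤ x) (hinv : IsIntegral ℤ x⁻¹) : |(minpoly ℚ x).coeff 0| = 1 := by
  rw [minpoly.isIntegrallyClosed_eq_field_fractions' ℚ hx, coeff_map]
  rcases Int.isUnit_iff.mp (isUnit_coeff_zero_minpoly hx0 hx hinv) with h | h <;> simp [h]

theorem aeval_conj_eq_zero {p : ℚ[X]} {z : ℂ} (hz : aeval z p = 0) : aeval (conj z) p = 0 := by
  simpa [hz] using aeval_algHom_apply (Complex.conjAe.toAlgHom.restrictScalars ℚ) z p

theorem Irreducible.aeval_algebraMap_ne_zero {K L : Type*} [Field K] [CommRing L] [Nontrivial L]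
    [Algebra K L] {p : K[X]} (hirr : Irreducible p) (hdeg : p.natDegree ≠ 1) (q : K) :
    aeval (algebraMap K L q) p ≠ 0 := by
  rw [aeval_algebraMap_apply_eq_algebraMap_eval, map_ne_zero_iff _ (algebraMap K L).injective]
  exact hirr.not_isRoot_of_natDegree_ne_one hdeg

theorem Multiset.exists_eq_cons_cons_singleton {α : Type*} [DecidableEq α] {s : Multiset α}
    {a b : α} (hs : s.card = 3) (ha : a ∈ s) (hb : b ∈ s) (hba : b ≠ a) :
    ∃ c, s = a ::ₘ b ::ₘ {c} := by
  have hb' : b ∈ s.erase a := (Multiset.mem_erase_of_ne hba).mpr hb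
  obtain ⟨c, hc⟩ := Multiset.card_eq_one.mp <| by
    rw [Multiset.card_erase_of_mem hb', Multiset.card_erase_of_mem ha, hs]; rfl
  exact ⟨c, by rw [← hc, Multiset.cons_erase hb', Multiset.cons_erase ha]⟩

theorem norm_prod_aroots {p : ℚ[X]} (hmon : p.Monic) : ‖(p.aroots ℂ).prod‖ = |p.coeff 0| := by
  have h := (IsAlgClosed.splits (p.map (algebraMap ℚ ℂ))).coeff_zero_eq_prod_roots_of_monic
    (hmon.map _)
  rw [coeff_map] at h
  simpa using (congrArg norm h).symm

theorem norm_eq_one_of_aroots_eq_cons_cons {p : ℚ[X]} (hirr : Irreducible p)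
    (hdeg : p.natDegree ≠ 1) {a : ℝ} {b c : ℂ} (hroots : p.aroots ℂ = (a : ℂ) ::ₘ b ::ₘ {c})
    (hb : ‖b‖ = 1) : ‖c‖ = 1 := by
  have hnodup : (p.aroots ℂ).Nodup := nodup_roots hirr.separable.map
  have hb_root : aeval b p = 0 := (mem_aroots.mp (by simp [hroots])).2
  have hconj : conj b ∈ p.aroots ℂ := mem_aroots.mpr ⟨hirr.ne_zero, aeval_conj_eq_zero hb_root⟩
  rw [hroots] at hnodup hconj
  simp only [Multiset.mem_cons, Multiset.mem_singleton] at hconj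
  rcases hconj with h | h | h
  · have hba : b = a := by simpa using congrArg conj h
    simp [hba] at hnodup
  · obtain ⟨r, rfl⟩ := Complex.conj_eq_iff_real.mp h
    rw [Complex.norm_real, Real.norm_eq_abs] at hb
    rcases abs_eq_abs.mp (hb.trans abs_one.symm) with hr | hr
    · exact absurd (by simpa [hr] using hb_root) (hirr.aeval_algebraMap_ne_zero hdeg (L := ℂ) 1)
    · exact absurd (by simpa [hr] using hb_root) (hirr.aeval_algebraMap_ne_zero hdeg (L := ℂ) (-1))
  · rw [← h, Complex.norm_conj, hb]

theorem exists_third_root {p : ℚ[X]} (hmon : p.Monic) (hirr : Irreducible p)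
    (hdeg : p.natDegree = 3) {α : ℝ} (hα : aeval α p = 0) {β : ℂ} (hβ : aeval β p = 0)
    (hβα : β ≠ α) :
    ∃ γ : ℂ, aeval γ p = 0 ∧ γ ≠ α ∧ |α| * (‖β‖ * ‖γ‖) = |p.coeff 0| ∧ (‖β‖ = 1 → ‖γ‖ = 1) := by
  have hαC : aeval (α : ℂ) p = 0 := by
    rw [← Complex.coe_algebraMap, aeval_algebraMap_apply, hα, map_zero]
  obtain ⟨γ, hroots⟩ := Multiset.exists_eq_cons_cons_singleton
    (hdeg ▸ IsAlgClosed.card_aroots_eq_natDegree) (mem_aroots.mpr ⟨hmon.ne_zero, hαC⟩)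
    (mem_aroots.mpr ⟨hmon.ne_zero, hβ⟩) hβα
  have hnodup : (p.aroots ℂ).Nodup := nodup_roots hirr.separable.map
  rw [hroots] at hnodup
  refine ⟨γ, (mem_aroots.mp (by simp [hroots])).2, ?_, ?_,
    norm_eq_one_of_aroots_eq_cons_cons hirr (by omega) hroots⟩
  · rintro rfl; simp at hnodup
  · rw [← norm_prod_aroots hmon, hroots]
    simp

theorem biPerron_iff_pisot_of_natDegree_eq_three {p : ℚ[X]} (hmon : p.Monic)
    (hirr : Irreducible p) (hdeg : p.natDegree = 3) (hunit : |p.coeff 0| = 1) {α : ℝ}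
    (h1 : 1 < α) (hα : aeval α p = 0) :
    (∀ β : ℂ, aeval β p = 0 → β ≠ (α : ℂ) → α⁻¹ ≤ ‖β‖ ∧ ‖β‖ < α) ↔
    (∀ β : ℂ, aeval β p = 0 → β ≠ (α : ℂ) → ‖β‖ < 1) := by
  have hα0 : 0 < α := by linarith
  constructor
  · intro hbiPerron β hβ hβα
    obtain ⟨γ, hγ, hγα, hprod, hnorm⟩ := exists_third_root hmon hirr hdeg hα hβ hβα
    rw [abs_of_pos hα0, hunit, Rat.cast_one] at hprod
    have hγ_ge : α⁻¹ ≤ ‖γ‖ := (hbiPerron γ hγ hγα).1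
    by_contra! hβ_ge
    have hαγ : 1 ≤ α * ‖γ‖ := (inv_le_iff_one_le_mul₀' hα0).mp hγ_ge
    have hβ_one : ‖β‖ = 1 := by nlinarith
    have hγ_one := hnorm hβ_one
    rw [hβ_one, hγ_one] at hprod
    linarith
  · intro hpisot β hβ hβα
    obtain ⟨γ, hγ, hγα, hprod, -⟩ := exists_third_root hmon hirr hdeg hα hβ hβα
    rw [abs_of_pos hα0, hunit, Rat.cast_one] at hprod
    have hβ_lt := hpisot β hβ hβα
    have hγ_lt := hpisot γ hγ hγα
    refine ⟨?_, hβ_lt.trans h1⟩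
    rw [inv_le_iff_one_le_mul₀ hα0]
    nlinarith [norm_nonneg β, norm_nonneg γ]

theorem stmt6 (α : ℝ) (h1 : 1 < α) (hint : IsIntegral ℤ α) (hunit : IsIntegral ℤ α⁻¹)
    (hdeg : (minpoly ℚ α).natDegree = 3) :
    (∀ β : ℂ, (Polynomial.aeval β) (minpoly ℚ α) = 0 → β ≠ (α : ℂ) →
        α⁻¹ ≤ ‖β‖ ∧ ‖β‖ < α) ↔
    (∀ β : ℂ, (Polynomial.aeval β) (minpoly ℚ α) = 0 → β ≠ (α : ℂ) → ‖β‖ < 1) := by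
  have hQ : IsIntegral ℚ α := hint.tower_top
  exact biPerron_iff_pisot_of_natDegree_eq_three (minpoly.monic hQ) (minpoly.irreducible hQ) hdeg
    (abs_coeff_zero_minpoly_eq_one (by positivity) hint hunit) h1 (minpoly.aeval ℚ α)
end

section
/- Let α be a bi-Perron algebraic number with minimal polynomial p(x). If p(x) = f(x^k) for some f ∈ ℤ[x] and natural number k ≥ 1, then k = 1. -/
open Polynomial

theorem stmt10 (α : ℝ) (h1 : 1 < α) (halg : IsAlgebraic ℚ α)
    (hbp : ∀ β : ℂ, (Polynomial.aeval β) (minpoly ℚ α) = 0 → β ≠ (α : ℂ) →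
      α⁻¹ ≤ ‖β‖ ∧ ‖β‖ < α)
    (f : Polynomial ℤ) (k : ℕ) (hk : 1 ≤ k)
    (hf : minpoly ℚ α = (f.map (algebraMap ℤ ℚ)).comp (X ^ k)) :
    k = 1 := by
  by_contra hne
  have hk2 : 2 ≤ k := lt_of_le_of_ne hk (Ne.symm hne)
  have hk0 : k ≠ 0 := by omega
  set ζ : ℂ := Complex.exp (2 * Real.pi * Complex.I / k) with hζdef
  have hprim : IsPrimitiveRoot ζ k := Complex.isPrimitiveRoot_exp k hk0
  have hζk : ζ ^ k = 1 := hprim.pow_eq_one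
  have hζne1 : ζ ≠ 1 := hprim.ne_one hk2
  have hnormζ : ‖ζ‖ = 1 := Complex.norm_eq_one_of_pow_eq_one hζk hk0
  have hα0 : (α : ℂ) ≠ 0 := by
    simp only [ne_eq, Complex.ofReal_eq_zero]
    linarith
  -- α is a root of minpoly over ℂ
  have hroot : (Polynomial.aeval (α : ℂ)) (minpoly ℚ α) = 0 := by
    have h0 : (Polynomial.aeval α) (minpoly ℚ α) = 0 := minpoly.aeval ℚ α
    have := Polynomial.aeval_algHom_apply (Complex.ofRealAm.restrictScalars ℚ) α (minpoly ℚ α)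
    simpa [h0] using this
  -- ζ * α is also a root
  have hroot2 : (Polynomial.aeval (ζ * α : ℂ)) (minpoly ℚ α) = 0 := by
    have key : ∀ z : ℂ, (Polynomial.aeval z) (minpoly ℚ α)
        = (Polynomial.aeval (z ^ k)) (f.map (algebraMap ℤ ℚ)) := by
      intro z
      rw [hf, Polynomial.aeval_comp]
      simp
    rw [key, mul_pow, hζk, one_mul, ← key, hroot]
  have hneq : (ζ * α : ℂ) ≠ (α : ℂ) := by
    intro h
    exact hζne1 (mul_right_cancel₀ hα0 (h.trans (one_mul _).symm))
  have := (hbp (ζ * α) hroot2 hneq).2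
  rw [norm_mul, hnormζ, one_mul, Complex.norm_real,
    Real.norm_of_nonneg (by linarith)] at this
  exact lt_irrefl α this
end

section
/- Let α be a nonzero algebraic number with ℚ(α) = ℚ(α + α⁻¹) and suppose the minimal polynomial p of α has degree n and is not reciprocal. Let p̂ be the minimal polynomial of α⁻¹ and q the minimal polynomial of α + α⁻¹. Then x^n · q(x + x⁻¹) = p(x) · p̂(x) as polynomials (where q also has degree n). -/
open Polynomial IntermediateField

lemma aux_eval (q : ℚ[X]) (n : ℕ) (hq : q.natDegree = n) (x : ℂ) (hx : x ≠ 0) :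
    aeval x (∑ i ∈ Finset.range (n + 1),
        C (q.coeff i) * X ^ (n - i) * (X ^ 2 + 1) ^ i)
      = x ^ n * aeval (x + x⁻¹) q := by
  rw [map_sum, aeval_eq_sum_range, hq, Finset.mul_sum]
  apply Finset.sum_congr rfl
  intro i hi
  have hi' : i ≤ n := Finset.mem_range_succ_iff.mp hi
  simp only [map_mul, aeval_C, map_pow, aeval_X, map_add, map_one]
  rw [Algebra.smul_def]
  have hx2 : x ^ 2 + 1 = x * (x + x⁻¹) := by field_simp
  have hxx : x ^ (n - i) * x ^ i = x ^ n := by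
    rw [← pow_add, Nat.sub_add_cancel hi']
  rw [hx2, mul_pow, show (algebraMap ℚ ℂ) (q.coeff i) * x ^ (n - i) * (x ^ i * (x + x⁻¹) ^ i)
      = (x ^ (n - i) * x ^ i) * ((algebraMap ℚ ℂ) (q.coeff i) * (x + x⁻¹) ^ i) by ring, hxx]


lemma aux_deg (q : ℚ[X]) (n : ℕ) (hq : q.natDegree = n) (hm : q.Monic) :
    (∑ i ∈ Finset.range (n + 1), C (q.coeff i) * X ^ (n - i) * (X ^ 2 + 1) ^ i).Monic ∧
    (∑ i ∈ Finset.range (n + 1), C (q.coeff i) * X ^ (n - i) * (X ^ 2 + 1) ^ i).natDegree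
      = 2 * n := by
  have h1 : ((X : ℚ[X]) ^ 2 + 1).Monic := by
    have := monic_X_pow_add_C (R := ℚ) (1 : ℚ) (two_ne_zero)
    simpa using this
  have h21 : ((X : ℚ[X]) ^ 2 + 1).natDegree = 2 := by
    have := natDegree_X_pow_add_C (n := 2) (r := (1:ℚ))
    simpa using this
  have hterm : ∀ i, (C (q.coeff i) * X ^ (n - i) * (X ^ 2 + 1) ^ i : ℚ[X]).natDegree
      ≤ (n - i) + i * 2 := by
    intro i
    refine natDegree_mul_le.trans (add_le_add (natDegree_mul_le.trans ?_) ?_)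
    · simp [natDegree_C, natDegree_X_pow]
    · rw [natDegree_pow, h21]
  have hle : (∑ i ∈ Finset.range (n + 1),
      C (q.coeff i) * X ^ (n - i) * (X ^ 2 + 1) ^ i).natDegree ≤ 2 * n := by
    refine natDegree_sum_le_of_forall_le _ _ ?_
    intro i hi
    have hi' := Finset.mem_range_succ_iff.mp hi
    exact (hterm i).trans (by omega)
  have hco : (∑ i ∈ Finset.range (n + 1),
      C (q.coeff i) * X ^ (n - i) * (X ^ 2 + 1) ^ i).coeff (2 * n) = 1 := by
    rw [finset_sum_coeff, Finset.sum_eq_single n]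
    · have hqn : q.coeff n = 1 := by rw [← hq]; exact hm.coeff_natDegree
      have hmn : ((X : ℚ[X]) ^ 2 + 1) ^ n |>.Monic := h1.pow n
      have hdn : (((X : ℚ[X]) ^ 2 + 1) ^ n).natDegree = 2 * n := by
        rw [natDegree_pow, h21]; ring
      simp only [hqn, map_one, one_mul, Nat.sub_self, pow_zero, one_mul]
      rw [← hdn]
      exact hmn.coeff_natDegree
    · intro i hi hne
      have hi' := Finset.mem_range_succ_iff.mp hi
      apply coeff_eq_zero_of_natDegree_lt
      exact lt_of_le_of_lt (hterm i) (by omega)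
    · intro h; exact absurd (Finset.self_mem_range_succ n) h
  have hmon := monic_of_natDegree_le_of_coeff_eq_one (2 * n) hle hco
  refine ⟨hmon, le_antisymm hle (le_natDegree_of_ne_zero ?_)⟩
  rw [hco]; exact one_ne_zero

theorem stmt11 (α : ℂ) (hα : α ≠ 0) (halg : IsAlgebraic ℚ α)
    (hfield : ℚ⟮α⟯ = ℚ⟮α + α⁻¹⟯) (n : ℕ) (hn : (minpoly ℚ α).natDegree = n)
    (hnr : ¬ IsReciprocal (minpoly ℚ α)) :
    (minpoly ℚ (α + α⁻¹)).natDegree = n ∧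
    (∑ i ∈ Finset.range (n + 1),
        C ((minpoly ℚ (α + α⁻¹)).coeff i) * X ^ (n - i) * (X ^ 2 + 1) ^ i)
      = minpoly ℚ α * minpoly ℚ α⁻¹ := by
  have hint : IsIntegral ℚ α := halg.isIntegral
  have hinv : IsIntegral ℚ α⁻¹ := hint.inv
  have hβ : IsIntegral ℚ (α + α⁻¹) := hint.add hinv
  have hadj : ℚ⟮α⁻¹⟯ = ℚ⟮α⟯ := by
    apply le_antisymm
    · exact adjoin_simple_le_iff.mpr (IntermediateField.inv_mem _ (mem_adjoin_simple_self ℚ α))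
    · refine adjoin_simple_le_iff.mpr ?_
      have h := IntermediateField.inv_mem ℚ⟮α⁻¹⟯ (mem_adjoin_simple_self ℚ α⁻¹)
      rwa [inv_inv] at h
  have hqdeg : (minpoly ℚ (α + α⁻¹)).natDegree = n := by
    rw [← adjoin.finrank hβ, ← hfield, adjoin.finrank hint, hn]
  have hp2deg : (minpoly ℚ α⁻¹).natDegree = n := by
    rw [← adjoin.finrank hinv, hadj, adjoin.finrank hint, hn]
  refine ⟨hqdeg, ?_⟩
  set q := minpoly ℚ (α + α⁻¹) with hq
  set F := ∑ i ∈ Finset.range (n + 1), C (q.coeff i) * X ^ (n - i) * (X ^ 2 + 1) ^ i with hFdef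
  obtain ⟨hFmon, hFdeg⟩ := aux_deg q n hqdeg (minpoly.monic hβ)
  rw [← hFdef] at hFmon hFdeg
  have hα' : α⁻¹ ≠ 0 := inv_ne_zero hα
  have hFα : aeval α F = 0 := by
    rw [hFdef, aux_eval q n hqdeg α hα, hq, minpoly.aeval, mul_zero]
  have hFα' : aeval α⁻¹ F = 0 := by
    rw [hFdef, aux_eval q n hqdeg α⁻¹ hα', inv_inv, add_comm α⁻¹ α, hq, minpoly.aeval, mul_zero]
  have hdvd1 : minpoly ℚ α ∣ F := minpoly.dvd ℚ α hFα
  have hdvd2 : minpoly ℚ α⁻¹ ∣ F := minpoly.dvd ℚ α⁻¹ hFα'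
  by_cases hpp : minpoly ℚ α = minpoly ℚ α⁻¹
  · -- degenerate case: minpoly α = minpoly α⁻¹ forces α = 1
    have hα1 : α = 1 := by
      have : Invertible α := invertibleOfNonzero hα
      have hrev0 : aeval α⁻¹ (minpoly ℚ α).reverse = 0 := by
        have h := (eval₂_reverse_eq_zero_iff (algebraMap ℚ ℂ) α (minpoly ℚ α)).mpr
          (minpoly.aeval ℚ α)
        rwa [invOf_eq_inv, ← aeval_def] at h
      have hdr : minpoly ℚ α ∣ (minpoly ℚ α).reverse := by
        nth_rewrite 1 [hpp]
        exact minpoly.dvd ℚ α⁻¹ hrev0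
      obtain ⟨u, hu⟩ := hdr
      have hrne : (minpoly ℚ α).reverse ≠ 0 := by
        rw [Ne, reverse_eq_zero]; exact minpoly.ne_zero hint
      have hu0 : u ≠ 0 := by rintro rfl; rw [mul_zero] at hu; exact hrne hu
      have hrevdeg : (minpoly ℚ α).reverse.natDegree ≤ n := hn ▸ reverse_natDegree_le _
      have hudeg : u.natDegree = 0 := by
        have h2 := congrArg natDegree hu
        rw [natDegree_mul (minpoly.ne_zero hint) hu0, hn] at h2
        omega
      obtain ⟨c, rfl⟩ : ∃ c : ℚ, u = C c := ⟨u.coeff 0, eq_C_of_natDegree_eq_zero hudeg⟩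
      have hco0 : (minpoly ℚ α).reverse.coeff 0 = 1 := by
        rw [coeff_zero_reverse]; exact (minpoly.monic hint).leadingCoeff
      have hcon : (minpoly ℚ α).reverse.coeff n = (minpoly ℚ α).coeff 0 := by
        rw [coeff_reverse, hn, revAt_le (le_refl n), Nat.sub_self]
      have e0 : (1 : ℚ) = (minpoly ℚ α).coeff 0 * c := by
        rw [← hco0, hu, coeff_mul_C]
      have en : (minpoly ℚ α).coeff 0 = c := by
        rw [← hcon, hu, coeff_mul_C, ← hn, (minpoly.monic hint).coeff_natDegree, one_mul]
      have hc2 : c * c = 1 := by rw [← en] at e0 ⊢; exact e0.symm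
      rcases mul_self_eq_one_iff.mp hc2 with hc1 | hc1
      · -- c = 1 : p is reciprocal, contradiction
        exfalso; apply hnr
        intro i hi
        rw [hn] at hi ⊢
        have : (minpoly ℚ α).reverse.coeff i = (minpoly ℚ α).coeff (n - i) := by
          rw [coeff_reverse, hn, revAt_le hi]
        rw [← this, hu, hc1, map_one, mul_one]
      · -- c = -1 : then p(1) = 0, so p = X - 1, α = 1
        have hrevp : (minpoly ℚ α).reverse = -(minpoly ℚ α) := by
          rw [hu, hc1, map_neg, map_one, mul_neg, mul_one]
        have hev : (minpoly ℚ α).eval 1 = 0 := by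
          have : Invertible (1 : ℚ) := invertibleOne
          have h := eval₂_reverse_mul_pow (RingHom.id ℚ) (1 : ℚ) (minpoly ℚ α)
          rw [invOf_one, one_pow, mul_one, hrevp, eval₂_at_one, eval₂_at_one] at h
          simp only [RingHom.id_apply, eval_neg] at h
          linarith
        have hXd : (X - C (1:ℚ)) ∣ minpoly ℚ α := dvd_iff_isRoot.mpr hev
        have hassoc := (irreducible_X_sub_C (1:ℚ)).associated_of_dvd
          (minpoly.irreducible hint) hXd
        have hpeq : minpoly ℚ α = X - C 1 :=
          (eq_of_monic_of_associated (monic_X_sub_C 1) (minpoly.monic hint) hassoc).symm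
        have := minpoly.aeval ℚ α
        rw [hpeq] at this
        simp only [map_sub, aeval_X, aeval_C, map_one] at this
        linear_combination this
    subst hα1
    have hp1 : minpoly ℚ (1:ℂ) = X - C 1 := by
      have := minpoly.eq_X_sub_C ℂ (1:ℚ)
      rwa [map_one] at this
    have hn1 : n = 1 := by rw [hp1] at hn; rw [← hn, natDegree_X_sub_C]
    have hq2 : minpoly ℚ ((1:ℂ) + 1⁻¹) = X - C 2 := by
      have := minpoly.eq_X_sub_C ℂ (2:ℚ)
      rw [show ((1:ℂ) + 1⁻¹) = algebraMap ℚ ℂ 2 by norm_num]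
      exact this
    rw [hFdef, hq, hq2, show ((1:ℂ)⁻¹) = 1 by norm_num, hp1]
    subst hn1
    rw [Finset.sum_range_succ, Finset.sum_range_succ, Finset.sum_range_zero]
    norm_num [coeff_sub, coeff_X_zero, coeff_C_zero, coeff_X_one, coeff_C, map_ofNat]
    ring
  · have hcop : IsCoprime (minpoly ℚ α) (minpoly ℚ α⁻¹) := by
      rw [(minpoly.irreducible hint).coprime_iff_not_dvd]
      intro hdvd
      exact hpp (eq_of_monic_of_associated (minpoly.monic hint) (minpoly.monic hinv)
        ((minpoly.irreducible hint).associated_of_dvd (minpoly.irreducible hinv) hdvd))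
    obtain ⟨c, hc⟩ := hcop.mul_dvd hdvd1 hdvd2
    have hmm : (minpoly ℚ α * minpoly ℚ α⁻¹).Monic :=
      (minpoly.monic hint).mul (minpoly.monic hinv)
    have hmuldeg : (minpoly ℚ α * minpoly ℚ α⁻¹).natDegree = 2 * n := by
      rw [natDegree_mul (minpoly.ne_zero hint) (minpoly.ne_zero hinv), hn, hp2deg]; ring
    have hc0 : c ≠ 0 := by rintro rfl; rw [mul_zero] at hc; exact hFmon.ne_zero hc
    rw [hc, natDegree_mul hmm.ne_zero hc0, hmuldeg] at hFdeg
    have hcdeg : c.natDegree = 0 := by omega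
    rw [hc] at hFmon
    have hcm : c.Monic := hmm.of_mul_monic_left hFmon
    have : c = 1 := hcm.natDegree_eq_zero.mp hcdeg
    rw [this, mul_one] at hc
    exact hc
end

section
/- For every integer k ≥ 2, the cubic polynomial x³ - (2k+4)x² + (k+4)x - 1 is irreducible over ℚ, is not reciprocal, and its largest real root is a Pisot unit (hence a bi-Perron unit). -/
/-!
A rational root of the cubic would be an integer (the cubic is monic over `ℤ`) dividing the
constant term `-1`, and the cubic takes the values `-k` and `-3k - 10` at `±1`; a cubic without
rational roots is irreducible. The value `-k` at `1` also gives a real root `α > 1`. Dividing out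
`X - α`, the two other roots `β, γ` satisfy `αβγ = 1` and `(α - 1)(1 - β)(1 - γ) = k`. If they are
real they are positive (the cubic is negative on `(-∞, 0]`), hence both lie in `(0, 1)` and
`β = 1/(αγ) > 1/α`; otherwise they are complex conjugate and `|β|² = 1/α`. So `α` is the largest
real root and a Pisot number. It is a unit because the inverse of a root of `x³ - ax² + bx - 1` is
a root of `x³ - bx² + ax - 1`.
-/

open Polynomial

theorem isIntegral_of_cubic_eq_zero {A : Type*} [CommRing A] {a b : ℤ} {x : A}
    (h : x^3 - a*x^2 + b*x - 1 = 0) : IsIntegral ℤ x :=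
  ⟨X^3 - C a * X^2 + C b * X - 1, by monicity!, by rw [← aeval_def]; simpa using h⟩

theorem cubic_inv_eq_zero {F : Type*} [Field F] {a b x : F}
    (h : x^3 - a*x^2 + b*x - 1 = 0) : x⁻¹^3 - b*x⁻¹^2 + a*x⁻¹ - 1 = 0 := by
  have hx : x ≠ 0 := by rintro rfl; norm_num at h
  field_simp
  linear_combination -h

namespace PisotCubic

section Domain

variable {R : Type*} [CommRing R] [IsDomain R] {K α β γ : R}

theorem quadratic_of_ne (hα : α^3 - (2*K+4)*α^2 + (K+4)*α - 1 = 0)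
    (hβ : β^3 - (2*K+4)*β^2 + (K+4)*β - 1 = 0) (hne : β ≠ α) :
    β^2 + β*α + α^2 - (2*K+4)*(β+α) + K + 4 = 0 := by
  have h : (β - α) * (β^2 + β*α + α^2 - (2*K+4)*(β+α) + K + 4) = 0 := by
    linear_combination hβ - hα
  exact (mul_eq_zero.mp h).resolve_left (sub_ne_zero.mpr hne)

theorem vieta (hα : α^3 - (2*K+4)*α^2 + (K+4)*α - 1 = 0)
    (hβ : β^3 - (2*K+4)*β^2 + (K+4)*β - 1 = 0) (hne : β ≠ α) :
    α * (β * (2*K+4 - α - β)) = 1 ∧ (α - 1) * ((1 - β) * (1 - (2*K+4 - α - β))) = K := by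
  have hquad := quadratic_of_ne hα hβ hne
  constructor
  · linear_combination -α * hquad + hα
  · linear_combination (1 - α) * hquad + hα

theorem eq_of_three_roots (hα : α^3 - (2*K+4)*α^2 + (K+4)*α - 1 = 0)
    (hβ : β^3 - (2*K+4)*β^2 + (K+4)*β - 1 = 0) (hγ : γ^3 - (2*K+4)*γ^2 + (K+4)*γ - 1 = 0)
    (hβα : β ≠ α) (hγα : γ ≠ α) (hγβ : γ ≠ β) :
    γ = 2*K+4 - α - β := by
  have h : (γ - β) * (γ - (2*K+4 - α - β)) = 0 := by
    linear_combination quadratic_of_ne hα hγ hγα - quadratic_of_ne hα hβ hβα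
  exact sub_eq_zero.mp ((mul_eq_zero.mp h).resolve_left (sub_ne_zero.mpr hγβ))

end Domain

variable {K α : ℝ}

theorem neg_of_nonpos (hK : -2 ≤ K) {t : ℝ} (ht : t ≤ 0) :
    t^3 - (2*K+4)*t^2 + (K+4)*t - 1 < 0 := by
  nlinarith [mul_nonneg (sq_nonneg t) (neg_nonneg.mpr ht),
    mul_nonneg (sq_nonneg t) (by linarith : 0 ≤ 2*K+4),
    mul_nonpos_of_nonneg_of_nonpos (by linarith : 0 ≤ K + 4) ht]

theorem exists_root_gt_one (hK : 0 < K) :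
    ∃ α : ℝ, 1 < α ∧ α^3 - (2*K+4)*α^2 + (K+4)*α - 1 = 0 := by
  obtain ⟨α, ⟨hα1, -⟩, hα⟩ := intermediate_value_Icc (by linarith : (1:ℝ) ≤ 2*K+4)
    (f := fun x : ℝ => x^3 - (2*K+4)*x^2 + (K+4)*x - 1) (by fun_prop)
    (show (0:ℝ) ∈ Set.Icc _ _ by constructor <;> norm_num <;> nlinarith)
  refine ⟨α, lt_of_le_of_ne hα1 ?_, hα⟩
  rintro rfl
  norm_num at hα
  linarith

theorem real_root_mem_Ioo (hK : 0 < K) (hα1 : 1 < α)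
    (hα : α^3 - (2*K+4)*α^2 + (K+4)*α - 1 = 0) {t : ℝ}
    (ht : t^3 - (2*K+4)*t^2 + (K+4)*t - 1 = 0) (hne : t ≠ α) :
    t ∈ Set.Ioo α⁻¹ 1 := by
  obtain ⟨hprod, hK'⟩ := vieta hα ht hne
  set γ := 2*K+4 - α - t
  have ht0 : 0 < t := by
    by_contra! h
    linarith [neg_of_nonpos (by linarith : -2 ≤ K) h]
  have hγ0 : 0 < γ := by
    by_contra! h
    nlinarith [mul_nonpos_of_nonneg_of_nonpos (by positivity : 0 ≤ α * t) h]
  have hsame : 0 < (1 - t) * (1 - γ) := by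
    by_contra! h
    nlinarith [mul_nonpos_of_nonneg_of_nonpos (by linarith : 0 ≤ α - 1) h]
  have ht1 : t < 1 := by
    by_contra! h
    have hγ1 : 1 < γ := by nlinarith
    nlinarith [one_lt_mul_of_le_of_lt h hγ1]
  have hγ1 : γ < 1 := by nlinarith
  refine ⟨?_, ht1⟩
  rw [inv_lt_iff_one_lt_mul₀ (by linarith)]
  nlinarith [mul_pos (by linarith : (0:ℝ) < α) ht0]

theorem norm_root_mem_Ico (hK : 0 < K) (hα1 : 1 < α)
    (hα : α^3 - (2*K+4)*α^2 + (K+4)*α - 1 = 0) {β : ℂ}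
    (hβ : β^3 - (2*K+4)*β^2 + (K+4)*β - 1 = 0) (hne : β ≠ α) :
    ‖β‖ ∈ Set.Ico α⁻¹ 1 := by
  by_cases hreal : starRingEnd ℂ β = β
  · obtain ⟨t, rfl⟩ := Complex.conj_eq_iff_real.mp hreal
    obtain ⟨hαt, ht1⟩ :=
      real_root_mem_Ioo hK hα1 hα (by exact_mod_cast hβ) (by exact_mod_cast hne)
    rw [Complex.norm_real, Real.norm_of_nonneg (by linarith [inv_pos.mpr (by linarith : 0 < α)])]
    exact ⟨hαt.le, ht1⟩
  · have hαC : (α : ℂ)^3 - (2*K+4)*(α : ℂ)^2 + (K+4)*(α : ℂ) - 1 = 0 := by exact_mod_cast hα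
    have hβc : (starRingEnd ℂ β)^3 - (2*K+4)*(starRingEnd ℂ β)^2 + (K+4)*(starRingEnd ℂ β) - 1
        = 0 := by
      simpa [map_ofNat] using congrArg (starRingEnd ℂ) hβ
    have hβcα : starRingEnd ℂ β ≠ α := fun h => hne (by simpa using congrArg (starRingEnd ℂ) h)
    have hconj := eq_of_three_roots hαC hβ hβc hne hβcα hreal
    have hnormSq : α * Complex.normSq β = 1 := by
      have h := (vieta hαC hβ hne).1
      rw [← hconj, Complex.mul_conj] at h
      exact_mod_cast h
    have hsq : ‖β‖^2 = α⁻¹ := by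
      rw [Complex.sq_norm]
      exact eq_inv_of_mul_eq_one_right hnormSq
    have hlt : ‖β‖ < 1 := by nlinarith [norm_nonneg β, inv_lt_one_of_one_lt₀ hα1]
    exact ⟨by nlinarith [norm_nonneg β], hlt⟩

end PisotCubic

noncomputable def pisotCubic (k : ℤ) : ℚ[X] :=
  X ^ 3 - C ((2*k+4 : ℤ) : ℚ) * X ^ 2 + C ((k+4 : ℤ) : ℚ) * X - 1

theorem natDegree_pisotCubic (k : ℤ) : (pisotCubic k).natDegree = 3 := by
  unfold pisotCubic; compute_degree!

theorem aeval_pisotCubic {A : Type*} [CommRing A] [Algebra ℚ A] (k : ℤ) (x : A) :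
    aeval x (pisotCubic k) = x^3 - (2*k+4)*x^2 + (k+4)*x - 1 := by
  simp [pisotCubic, map_ofNat]

theorem not_isReciprocal_pisotCubic (k : ℤ) : ¬ IsReciprocal (pisotCubic k) := by
  intro h
  have h0 := h 0 (Nat.zero_le _)
  have hmonic : (pisotCubic k).Monic := by unfold pisotCubic; monicity!
  rw [Nat.sub_zero, hmonic.coeff_natDegree, coeff_zero_eq_aeval_zero, aeval_pisotCubic] at h0
  norm_num at h0

theorem irreducible_pisotCubic {k : ℤ} (hk : k ≠ 0) : Irreducible (pisotCubic k) := by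
  rw [irreducible_iff_roots_eq_zero_of_degree_le_three (by rw [natDegree_pisotCubic]; norm_num)
    (by rw [natDegree_pisotCubic]), Multiset.eq_zero_iff_forall_notMem]
  intro r hr
  have hr : r^3 - (2*k+4)*r^2 + (k+4)*r - 1 = 0 := by
    rw [← aeval_pisotCubic, aeval_def, eval₂_eq_eval_map, Algebra.algebraMap_self, map_id]
    exact (mem_roots'.mp hr).2
  obtain ⟨n, rfl⟩ := IsIntegrallyClosed.isIntegral_iff.mp
    (isIntegral_of_cubic_eq_zero (a := 2*k+4) (b := k+4) (x := r) (by exact_mod_cast hr))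
  simp only [algebraMap_int_eq, eq_intCast] at hr
  have hn : n^3 - (2*k+4)*n^2 + (k+4)*n - 1 = 0 := by exact_mod_cast hr
  rcases Int.eq_one_or_neg_one_of_mul_eq_one (u := n) (v := n^2 - (2*k+4)*n + (k+4))
    (by linear_combination hn) with rfl | rfl <;> omega

theorem stmt16 (k : ℤ) (hk : 2 ≤ k) :
    Irreducible ((X ^ 3 - C ((2*k+4 : ℤ) : ℚ) * X ^ 2 + C ((k+4 : ℤ) : ℚ) * X - 1)) ∧
    ¬ IsReciprocal (X ^ 3 - C ((2*k+4 : ℤ) : ℚ) * X ^ 2 + C ((k+4 : ℤ) : ℚ) * X - 1) ∧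
    ∃ α : ℝ,
      (Polynomial.aeval α) (X ^ 3 - C ((2*k+4 : ℤ) : ℚ) * X ^ 2 + C ((k+4 : ℤ) : ℚ) * X - 1) = 0 ∧
      (∀ β : ℝ, (Polynomial.aeval β)
          (X ^ 3 - C ((2*k+4 : ℤ) : ℚ) * X ^ 2 + C ((k+4 : ℤ) : ℚ) * X - 1) = 0 → β ≤ α) ∧
      1 < α ∧ IsIntegral ℤ α ∧ IsIntegral ℤ α⁻¹ ∧
      (∀ β : ℂ, (Polynomial.aeval β)
          (X ^ 3 - C ((2*k+4 : ℤ) : ℚ) * X ^ 2 + C ((k+4 : ℤ) : ℚ) * X - 1) = 0 →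
        β ≠ (α : ℂ) → ‖β‖ < 1) ∧
      (∀ β : ℂ, (Polynomial.aeval β)
          (X ^ 3 - C ((2*k+4 : ℤ) : ℚ) * X ^ 2 + C ((k+4 : ℤ) : ℚ) * X - 1) = 0 →
        β ≠ (α : ℂ) → α⁻¹ ≤ ‖β‖ ∧ ‖β‖ < α) := by
  rw [← pisotCubic.eq_1]
  have hK : (0 : ℝ) < k := by exact_mod_cast (by omega : (0 : ℤ) < k)
  obtain ⟨α, hα1, hα⟩ := PisotCubic.exists_root_gt_one hK
  have hnorm (β : ℂ) (hβ : aeval β (pisotCubic k) = 0) (hne : β ≠ α) : ‖β‖ ∈ Set.Ico α⁻¹ 1 := by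
    rw [aeval_pisotCubic] at hβ
    exact PisotCubic.norm_root_mem_Ico hK hα1 hα (by exact_mod_cast hβ) hne
  refine ⟨irreducible_pisotCubic (by omega), not_isReciprocal_pisotCubic k, α,
    by rw [aeval_pisotCubic]; exact hα, ?_, hα1, ?_, ?_, fun β hβ hne => (hnorm β hβ hne).2,
    fun β hβ hne => ⟨(hnorm β hβ hne).1, (hnorm β hβ hne).2.trans hα1⟩⟩
  · intro β hβ
    rcases eq_or_ne β α with rfl | hne
    · rfl
    rw [aeval_pisotCubic] at hβ
    linarith [(PisotCubic.real_root_mem_Ioo hK hα1 hα hβ hne).2]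
  · exact isIntegral_of_cubic_eq_zero (a := 2*k+4) (b := k+4) (by push_cast; exact hα)
  · exact isIntegral_of_cubic_eq_zero (a := k+4) (b := 2*k+4)
      (by push_cast; exact cubic_inv_eq_zero hα)
end
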